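/- Let g : ℝ² → ℂ be continuous with |g(ξ)| ≤ C (1 + ‖ξ‖²)^{−2} for some C > 0, let b : ℝ → ℂ be continuous and bounded, let w, ξ₀ ∈ ℝ², and let (δ_ħ)_{ħ∈(0,1]} be positive numbers with δ_ħ ħ^{−1/2} → 0 as ħ → 0⁺. Then ħ Σ_{m ∈ ℤ²} b(δ_ħ ⟨m − ξ₀/ħ, w⟩) g(ħ^{1/2}(m − ξ₀/ħ)) → b(0) ∫_{ℝ²} g(ξ) dξ as ħ → 0⁺. -/

import Mathlib

/-!
With `s = √ħ` and `c = ħ⁻¹ ξ₀`, the sum `ħ Σ_m F(s (m - c))` is the integral over `ℝ²` of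
`F` evaluated at the lower-left corner of the grid square of side `s` containing `x`. As
`ħ → 0` these corners tend to `x`, and since they are within distance `s ≤ 1` of `x` in each
coordinate, the decay `(1 + ‖ξ‖²)⁻²` of `g` yields the integrable majorant
`9 C M (1 + x₁²)⁻¹ (1 + x₂²)⁻¹`. Writing `δ ⟨m - c, w⟩ = (δ / s) ⟨s (m - c), w⟩`, the argument
of `b` tends to `0` because `δ / √ħ → 0`, and dominated convergence gives the limit.
-/

open MeasureTheory Filter Real
open scoped Topology

noncomputable section

/-- The Euclidean inner product on `ℝ²`. -/
def dot2 (v w : ℝ × ℝ) : ℝ := v.1 * w.1 + v.2 * w.2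

/-- The Euclidean norm on `ℝ²`. -/
def nrm2 (v : ℝ × ℝ) : ℝ := Real.sqrt (dot2 v v)

/-- The canonical embedding `ℤ² ↪ ℝ²`. -/
def toR2 (m : ℤ × ℤ) : ℝ × ℝ := ((m.1 : ℝ), (m.2 : ℝ))

/-- Rotation of an integer vector by `+π/2`. -/
def perpZ (v : ℤ × ℤ) : ℤ × ℤ := (-v.2, v.1)

/-- `v` generates a primitive rank-1 sublattice `Λ = ℤ v` of `ℤ²`. -/
def Primitive (v : ℤ × ℤ) : Prop := Int.gcd v.1 v.2 = 1

/-- `L_Λ = ‖v_Λ‖`. -/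
def LL (v : ℤ × ℤ) : ℝ := nrm2 (toR2 v)

/-- `H_Λ(ξ) = ⟨ξ, v_Λ⟩ / L_Λ`, where `v` is the generator `v_Λ` of `Λ`. -/
def HH (v : ℤ × ℤ) (ξ : ℝ × ℝ) : ℝ := dot2 ξ (toR2 v) / LL v

/-- Integral over a fundamental domain of the torus `𝕋² = ℝ²/ℤ²`. -/
def torusInt (f : ℝ × ℝ → ℂ) : ℂ :=
  ∫ x in Set.Icc ((0, 0) : ℝ × ℝ) ((1, 1) : ℝ × ℝ), f x

/-- `e^{it}`. -/
def expI (t : ℝ) : ℂ := Complex.exp (Complex.I * (t : ℂ))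

open Set

lemma floor_div_add_preimage {s : ℝ} (hs : 0 < s) (c : ℝ) (k : ℤ) :
    (fun y : ℝ => ⌊y / s + c⌋) ⁻¹' {k} = Ico (s * (k - c)) (s * (k - c) + s) := by
  ext y
  simp only [mem_preimage, mem_singleton_iff, Int.floor_eq_iff, mem_Ico]
  rw [← sub_le_iff_le_add, le_div_iff₀ hs, ← lt_sub_iff_add_lt, div_lt_iff₀ hs]
  constructor <;> rintro ⟨h₁, h₂⟩ <;> constructor <;> linarith

lemma mul_floor_div_add_sub_mem_Ioc {s : ℝ} (hs : 0 < s) (c y : ℝ) :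
    s * (⌊y / s + c⌋ - c) ∈ Ioc (y - s) y := by
  have hy : y ∈ Ico (s * (⌊y / s + c⌋ - c)) (s * (⌊y / s + c⌋ - c) + s) := by
    rw [← floor_div_add_preimage hs]; rfl
  exact ⟨by linarith [hy.2], hy.1⟩

/-- `x` lies in the half-open square of side `s` with lower-left corner `s • (m - c)`,
`m = cellIndex s c x`. -/
def cellIndex (s : ℝ) (c : ℝ × ℝ) (x : ℝ × ℝ) : ℤ × ℤ := (⌊x.1 / s + c.1⌋, ⌊x.2 / s + c.2⌋)

def cellCorner (s : ℝ) (c : ℝ × ℝ) (x : ℝ × ℝ) : ℝ × ℝ := s • (toR2 (cellIndex s c x) - c)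

lemma measurable_cellIndex (s : ℝ) (c : ℝ × ℝ) : Measurable (cellIndex s c) :=
  (Int.measurable_floor.comp ((measurable_fst.div_const _).add_const _)).prodMk
    (Int.measurable_floor.comp ((measurable_snd.div_const _).add_const _))

lemma measureReal_cellIndex_preimage {s : ℝ} (hs : 0 < s) (c : ℝ × ℝ) (m : ℤ × ℤ) :
    volume.real (cellIndex s c ⁻¹' {m}) = s * s := by
  have hcell : cellIndex s c ⁻¹' {m} =
      ((fun y : ℝ => ⌊y / s + c.1⌋) ⁻¹' {m.1}) ×ˢ ((fun y : ℝ => ⌊y / s + c.2⌋) ⁻¹' {m.2}) := by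
    ext x; simp [cellIndex, Prod.ext_iff]
  rw [hcell, floor_div_add_preimage hs, floor_div_add_preimage hs, measureReal_def,
    Measure.volume_eq_prod, Measure.prod_prod, Real.volume_Ico, Real.volume_Ico,
    add_sub_cancel_left, add_sub_cancel_left, ENNReal.toReal_mul, ENNReal.toReal_ofReal hs.le]

theorem smul_tsum_eq_integral_comp_cellIndex {E : Type*} [NormedAddCommGroup E]
    [NormedSpace ℝ E] [CompleteSpace E] {s : ℝ} (hs : 0 < s) (c : ℝ × ℝ) {G : ℤ × ℤ → E}
    (hG : Integrable (G ∘ cellIndex s c)) :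
    (s * s) • ∑' m, G m = ∫ x, G (cellIndex s c x) := by
  have hn := measurable_cellIndex s c
  have hGm : AEStronglyMeasurable G (volume.map (cellIndex s c)) := .of_discrete
  rw [← integral_map hn.aemeasurable hGm,
    integral_countable ((integrable_map_measure hGm hn.aemeasurable).2 hG)]
  simp_rw [map_measureReal_apply hn (measurableSet_singleton _),
    measureReal_cellIndex_preimage hs]
  exact (tsum_const_smul'' _).symm

lemma cellCorner_fst_mem {s : ℝ} (hs : 0 < s) (c x : ℝ × ℝ) :
    (cellCorner s c x).1 ∈ Ioc (x.1 - s) x.1 :=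
  mul_floor_div_add_sub_mem_Ioc hs c.1 x.1

lemma cellCorner_snd_mem {s : ℝ} (hs : 0 < s) (c x : ℝ × ℝ) :
    (cellCorner s c x).2 ∈ Ioc (x.2 - s) x.2 :=
  mul_floor_div_add_sub_mem_Ioc hs c.2 x.2

lemma tendsto_cellCorner {ι : Type*} {l : Filter ι} {s : ι → ℝ} (hs : Tendsto s l (𝓝[>] 0))
    (c : ι → ℝ × ℝ) (x : ℝ × ℝ) :
    Tendsto (fun i => cellCorner (s i) (c i) x) l (𝓝 x) := by
  have hpos : ∀ᶠ i in l, 0 < s i := hs self_mem_nhdsWithin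
  have hs0 : Tendsto s l (𝓝 0) := hs.mono_right nhdsWithin_le_nhds
  have squeeze : ∀ (y : ℝ) (p : ι → ℝ), (∀ᶠ i in l, p i ∈ Ioc (y - s i) y) →
      Tendsto p l (𝓝 y) := fun y p hp =>
    tendsto_of_tendsto_of_tendsto_of_le_of_le' (by simpa using tendsto_const_nhds.sub hs0)
      tendsto_const_nhds (hp.mono fun _ h => h.1.le) (hp.mono fun _ h => h.2)
  exact (squeeze x.1 _ (hpos.mono fun i hi => cellCorner_fst_mem hi (c i) x)).prodMk_nhds
    (squeeze x.2 _ (hpos.mono fun i hi => cellCorner_snd_mem hi (c i) x))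

lemma nrm2_sq (v : ℝ × ℝ) : nrm2 v ^ 2 = v.1 ^ 2 + v.2 ^ 2 := by
  rw [nrm2, dot2, Real.sq_sqrt (add_nonneg (mul_self_nonneg _) (mul_self_nonneg _))]; ring

lemma one_add_sq_le_three_mul {x p : ℝ} (h : |x - p| ≤ 1) : 1 + x ^ 2 ≤ 3 * (1 + p ^ 2) := by
  nlinarith [sq_abs (x - p), abs_nonneg (x - p), sq_nonneg (x - 2 * p)]

lemma inv_one_add_nrm2_sq_sq_le {x p : ℝ × ℝ} (h₁ : |x.1 - p.1| ≤ 1) (h₂ : |x.2 - p.2| ≤ 1) :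
    ((1 + nrm2 p ^ 2) ^ 2)⁻¹ ≤ 9 * ((1 + x.1 ^ 2)⁻¹ * (1 + x.2 ^ 2)⁻¹) := by
  have hprod : (1 + x.1 ^ 2) * (1 + x.2 ^ 2) ≤ 9 * ((1 + p.1 ^ 2) * (1 + p.2 ^ 2)) := by
    nlinarith [mul_le_mul (one_add_sq_le_three_mul h₁) (one_add_sq_le_three_mul h₂)
      (by positivity) (by positivity)]
  rw [← mul_inv, ← div_eq_mul_inv, ← inv_div, nrm2_sq]
  refine inv_anti₀ (by positivity) ?_
  rw [div_le_iff₀ (by norm_num)]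
  nlinarith [mul_nonneg (sq_nonneg p.1) (sq_nonneg p.2)]

lemma norm_comp_cellCorner_le {E : Type*} [NormedAddCommGroup E] {f : ℝ × ℝ → E} {K : ℝ}
    (hK : 0 ≤ K) (hf : ∀ y, ‖f y‖ ≤ K / (1 + nrm2 y ^ 2) ^ 2) {s : ℝ} (hs : s ∈ Ioc 0 1)
    (c x : ℝ × ℝ) :
    ‖f (cellCorner s c x)‖ ≤ 9 * K * ((1 + x.1 ^ 2)⁻¹ * (1 + x.2 ^ 2)⁻¹) := by
  have close : ∀ {y q : ℝ}, q ∈ Ioc (y - s) y → |y - q| ≤ 1 := fun hq => by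
    rw [abs_le]; constructor <;> linarith [hq.1, hq.2, hs.2]
  calc ‖f (cellCorner s c x)‖ ≤ K * ((1 + nrm2 (cellCorner s c x) ^ 2) ^ 2)⁻¹ := hf _
    _ ≤ K * (9 * ((1 + x.1 ^ 2)⁻¹ * (1 + x.2 ^ 2)⁻¹)) :=
      mul_le_mul_of_nonneg_left (inv_one_add_nrm2_sq_sq_le
        (close (cellCorner_fst_mem hs.1 c x)) (close (cellCorner_snd_mem hs.1 c x))) hK
    _ = 9 * K * ((1 + x.1 ^ 2)⁻¹ * (1 + x.2 ^ 2)⁻¹) := by ring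

lemma integrable_inv_one_add_sq_mul_inv_one_add_sq :
    Integrable fun x : ℝ × ℝ => (1 + x.1 ^ 2)⁻¹ * (1 + x.2 ^ 2)⁻¹ := by
  simpa only [← Measure.volume_eq_prod] using
    integrable_inv_one_add_sq.mul_prod integrable_inv_one_add_sq

theorem tendsto_smul_tsum_of_decay {ι E : Type*} [NormedAddCommGroup E] [NormedSpace ℝ E]
    [CompleteSpace E] {l : Filter ι} [l.IsCountablyGenerated] {s : ι → ℝ}
    (hs : Tendsto s l (𝓝[>] 0)) (c : ι → ℝ × ℝ) {f : ι → ℝ × ℝ → E} {f₀ : ℝ × ℝ → E} {K : ℝ}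
    (hK : 0 ≤ K) (hdecay : ∀ i y, ‖f i y‖ ≤ K / (1 + nrm2 y ^ 2) ^ 2)
    (hlim : ∀ x, Tendsto (Function.uncurry f) (l ×ˢ 𝓝 x) (𝓝 (f₀ x))) :
    Tendsto (fun i => (s i * s i) • ∑' m : ℤ × ℤ, f i (s i • (toR2 m - c i))) l
      (𝓝 (∫ x, f₀ x)) := by
  set bound : ℝ × ℝ → ℝ := fun x => 9 * K * ((1 + x.1 ^ 2)⁻¹ * (1 + x.2 ^ 2)⁻¹)
  have hbound : Integrable bound := integrable_inv_one_add_sq_mul_inv_one_add_sq.const_mul _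
  have hsmall : ∀ᶠ i in l, s i ∈ Ioc 0 1 := hs (Ioc_mem_nhdsGT one_pos)
  have hmeas : ∀ i, AEStronglyMeasurable (fun x => f i (cellCorner (s i) (c i) x)) :=
    fun i => ((StronglyMeasurable.of_discrete
      (f := fun m : ℤ × ℤ => f i (s i • (toR2 m - c i)))).comp_measurable
      (measurable_cellIndex (s i) (c i))).aestronglyMeasurable
  have hle : ∀ᶠ i in l, ∀ x, ‖f i (cellCorner (s i) (c i) x)‖ ≤ bound x :=
    hsmall.mono fun i hi => norm_comp_cellCorner_le hK (hdecay i) hi (c i)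
  have hDCT := tendsto_integral_filter_of_dominated_convergence bound (.of_forall hmeas)
    (hle.mono fun _ h => ae_of_all _ h) hbound
    (ae_of_all _ fun x => (hlim x).comp (tendsto_id.prodMk (tendsto_cellCorner hs c x)))
  refine hDCT.congr' (hsmall.mono fun i hi => ?_)
  exact (smul_tsum_eq_integral_comp_cellIndex hi.1 (c i)
    (G := fun m => f i (s i • (toR2 m - c i)))
    (hbound.mono' (hmeas i)
      (ae_of_all _ (norm_comp_cellCorner_le hK (hdecay i) hi (c i))))).symm

lemma dot2_smul_left (a : ℝ) (v w : ℝ × ℝ) : dot2 (a • v) w = a * dot2 v w := by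
  simp only [dot2, Prod.smul_fst, Prod.smul_snd, smul_eq_mul]; ring

lemma continuous_dot2_left (w : ℝ × ℝ) : Continuous fun v => dot2 v w := by
  unfold dot2; fun_prop

theorem stmt15_general
    (g : ℝ × ℝ → ℂ) (hgc : Continuous g) (C : ℝ) (hC : 0 < C)
    (hg : ∀ ξ : ℝ × ℝ, ‖g ξ‖ ≤ C / (1 + nrm2 ξ ^ 2) ^ 2)
    (b : ℝ → ℂ) (hbc : Continuous b) (hbb : ∃ M : ℝ, ∀ t : ℝ, ‖b t‖ ≤ M)
    (w ξ₀ : ℝ × ℝ)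
    (δ : ℝ → ℝ)
    (hδ : Tendsto (fun hb => δ hb / Real.sqrt hb) (𝓝[>] (0:ℝ)) (𝓝 0)) :
    Tendsto
      (fun hb : ℝ => (hb : ℂ) * ∑' m : ℤ × ℤ,
        b (δ hb * dot2 (toR2 m - hb⁻¹ • ξ₀) w) *
          g (Real.sqrt hb • (toR2 m - hb⁻¹ • ξ₀)))
      (𝓝[>] (0:ℝ)) (𝓝 (b 0 * ∫ ξ : ℝ × ℝ, g ξ)) := by
  obtain ⟨M, hM⟩ := hbb
  have hM0 : 0 ≤ M := (norm_nonneg _).trans (hM 0)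
  have hsqrt : Tendsto Real.sqrt (𝓝[>] 0) (𝓝[>] 0) :=
    tendsto_nhdsWithin_of_tendsto_nhds_of_eventually_within _
      ((continuous_sqrt.tendsto' 0 0 sqrt_zero).mono_left nhdsWithin_le_nhds)
      (eventually_nhdsWithin_of_forall fun _ h => Real.sqrt_pos.2 h)
  have hlim := tendsto_smul_tsum_of_decay hsqrt (fun hb => hb⁻¹ • ξ₀)
    (f := fun hb y => b (δ hb / √hb * dot2 y w) * g y) (mul_nonneg hM0 hC.le)
    (fun _ y => by
      rw [norm_mul, mul_div_assoc]; exact mul_le_mul (hM _) (hg y) (norm_nonneg _) hM0)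
    (fun x => by
      have harg := (hδ.comp tendsto_fst).mul
        (((continuous_dot2_left w).tendsto x).comp tendsto_snd)
      rw [zero_mul] at harg
      exact ((hbc.tendsto 0).comp harg).mul ((hgc.tendsto x).comp tendsto_snd))
  rw [integral_const_mul] at hlim
  refine hlim.congr' (eventually_nhdsWithin_of_forall fun hb (hhb : 0 < hb) => ?_)
  have hcancel : ∀ d, δ hb / √hb * (√hb * d) = δ hb * d := fun d => by
    field_simp [(Real.sqrt_pos.2 hhb).ne']
  simp only [Real.mul_self_sqrt hhb.le, Complex.real_smul, dot2_smul_left, hcancel]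

/-- rescaled Riemann-sum limit at scales `δ_hb ≪ hb^{1/2}`:
`hb Σ_{m ∈ ℤ²} b(δ_hb ⟨m - ξ₀/hb, w⟩) g(hb^{1/2}(m - ξ₀/hb)) → b(0) ∫_{ℝ²} g(ξ) dξ`. -/
theorem stmt15
    (g : ℝ × ℝ → ℂ) (hgc : Continuous g) (C : ℝ) (hC : 0 < C)
    (hg : ∀ ξ : ℝ × ℝ, ‖g ξ‖ ≤ C / (1 + nrm2 ξ ^ 2) ^ 2)
    (b : ℝ → ℂ) (hbc : Continuous b) (hbb : ∃ M : ℝ, ∀ t : ℝ, ‖b t‖ ≤ M)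
    (w ξ₀ : ℝ × ℝ)
    (δ : ℝ → ℝ) (hδpos : ∀ hb ∈ Set.Ioc (0:ℝ) 1, 0 < δ hb)
    (hδ : Tendsto (fun hb => δ hb / Real.sqrt hb) (𝓝[>] (0:ℝ)) (𝓝 0)) :
    Tendsto
      (fun hb : ℝ => (hb : ℂ) * ∑' m : ℤ × ℤ,
        b (δ hb * dot2 (toR2 m - hb⁻¹ • ξ₀) w) *
          g (Real.sqrt hb • (toR2 m - hb⁻¹ • ξ₀)))
      (𝓝[>] (0:ℝ)) (𝓝 (b 0 * ∫ ξ : ℝ × ℝ, g ξ)) :=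
  stmt15_general g hgc C hC hg b hbc hbb w ξ₀ δ hδ
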